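/- Let I_age be a Min-Age instance and I_job the corresponding Min-WCS instance with n_chain = n, |C_i| = |M_i|, weights w_i^j = 2(b(M_i^j) − b(M_i^{j−1})) for 1 ≤ j ≤ |C_i|−1 and w_i^{|C_i|} = 2(T_0 − 1/2 − b(M_i^{m_i−1})) (using half-integer weights, or equivalently 2T_0 − 1 − 2b(M_i^{m_i−1})). If S_age and S_job are schedules with S_age(M_i^j) = S_job(J_i^j) + T_0 for all i, j, then (1) S_age is feasible iff S_job is feasible, and (2) 2·Age(S_age) = wcs(S_job), where wcs(S) = Σ_{all jobs} w_i^j · S(J_i^j) + Σ_{i} S(J_i^{|C_i|})^2. -/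
import Mathlib


/-- Indices of messages received at or before time `t`. -/
def received (m : ℕ) (S : ℕ → ℤ) (t : ℤ) : Finset ℕ :=
  (Finset.Icc 1 m).filter (fun j => S j ≤ t)

/-- Index of the latest message received at or before `t` (`0` if none). -/
noncomputable def lm (m : ℕ) (S : ℕ → ℤ) (t : ℤ) : ℕ :=
  if h : (received m S t).Nonempty then (received m S t).max' h else 0

/-- Age of a receiver at time `t`. -/
noncomputable def age (m : ℕ) (b : ℕ → ℤ) (S : ℕ → ℤ) (t : ℤ) : ℤ :=
  if lm m S t = m then 0 else t - b (lm m S t)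

/-- Overall age of a Min-Age schedule. -/
noncomputable def Age (n : ℕ) (m : Fin n → ℕ) (b : Fin n → ℕ → ℤ) (T0 : ℤ) (T : ℕ)
    (S : Fin n → ℕ → ℤ) : ℤ :=
  ∑ i, ∑ t ∈ Finset.Icc T0 (T0 + T), age (m i) (b i) (S i) t

/-- Feasibility of a Min-Age schedule: a bijection from the messages onto
`{T0+1, …, T0+T}` that is FCFS within each pair. -/
def AgeFeasible (n : ℕ) (m : Fin n → ℕ) (T0 : ℤ) (T : ℕ) (S : Fin n → ℕ → ℤ) : Prop :=
  (∀ i j, 1 ≤ j → j ≤ m i → S i j ∈ Finset.Icc (T0 + 1) (T0 + T)) ∧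
  (∀ i j i' j', 1 ≤ j → j ≤ m i → 1 ≤ j' → j' ≤ m i' →
    S i j = S i' j' → i = i' ∧ j = j') ∧
  (∀ t ∈ Finset.Icc (T0 + 1) (T0 + T), ∃ i j, 1 ≤ j ∧ j ≤ m i ∧ S i j = t) ∧
  (∀ i j, 1 ≤ j → j < m i → S i j < S i (j + 1))

/-- Feasibility of a Min-WCS schedule: a bijection from the jobs onto
`{1, …, T}` respecting chain precedence. -/
def JobFeasible (n : ℕ) (m : Fin n → ℕ) (T : ℕ) (S : Fin n → ℕ → ℕ) : Prop :=
  (∀ i j, 1 ≤ j → j ≤ m i → S i j ∈ Finset.Icc 1 T) ∧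
  (∀ i j i' j', 1 ≤ j → j ≤ m i → 1 ≤ j' → j' ≤ m i' →
    S i j = S i' j' → i = i' ∧ j = j') ∧
  (∀ t ∈ Finset.Icc 1 T, ∃ i j, 1 ≤ j ∧ j ≤ m i ∧ S i j = t) ∧
  (∀ i j, 1 ≤ j → j < m i → S i j < S i (j + 1))

/-- Objective of the Min-WCS problem. -/
def wcs (n : ℕ) (m : Fin n → ℕ) (w : Fin n → ℕ → ℤ) (S : Fin n → ℕ → ℕ) : ℤ :=
  (∑ i, ∑ j ∈ Finset.Icc 1 (m i), w i j * (S i j : ℤ))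
    + ∑ i, (S i (m i) : ℤ) * (S i (m i) : ℤ)

lemma tele_sum (b : ℕ → ℤ) (k : ℕ) :
    ∑ j ∈ Finset.Icc 1 k, (b j - b (j - 1)) = b k - b 0 := by
  induction k with
  | zero => simp
  | succ k ih =>
      rw [Finset.sum_Icc_succ_top (by omega), ih]
      simp only [Nat.add_sub_cancel]
      ring

lemma lm_le (m : ℕ) (S : ℕ → ℤ) (t : ℤ) : lm m S t ≤ m := by
  unfold lm
  split
  · next h =>
      have hmem := Finset.max'_mem _ h
      simp only [received, Finset.mem_filter, Finset.mem_Icc] at hmem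
      exact hmem.1.2
  · exact Nat.zero_le m

lemma lm_iff (m : ℕ) (S : ℕ → ℤ) (t : ℤ)
    (hmono : ∀ j j', 1 ≤ j → j ≤ j' → j' ≤ m → S j ≤ S j')
    (j : ℕ) (hj1 : 1 ≤ j) (hjm : j ≤ m) :
    j ≤ lm m S t ↔ S j ≤ t := by
  constructor
  · intro h
    by_cases hne : (received m S t).Nonempty
    · rw [lm, dif_pos hne] at h
      have hmax := Finset.max'_mem (received m S t) hne
      simp only [received, Finset.mem_filter, Finset.mem_Icc] at hmax
      calc S j ≤ S ((received m S t).max' hne) := hmono _ _ hj1 h hmax.1.2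
        _ ≤ t := hmax.2
    · rw [lm, dif_neg hne] at h
      omega
  · intro h
    have hjmem : j ∈ received m S t := by
      simp only [received, Finset.mem_filter, Finset.mem_Icc]
      exact ⟨⟨hj1, hjm⟩, h⟩
    have hne : (received m S t).Nonempty := ⟨j, hjmem⟩
    rw [lm, dif_pos hne]
    exact Finset.le_max' _ _ hjmem

lemma count_ico (a : ℤ) (p q : ℕ) (hpq : p ≤ q) :
    ∑ t ∈ Finset.Ico a (a + (q : ℤ)), (if (p : ℤ) + a ≤ t then (1 : ℤ) else 0)
      = (q : ℤ) - (p : ℤ) := by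
  rw [Finset.sum_boole]
  have h : (Finset.Ico a (a + (q : ℤ))).filter (fun t => (p : ℤ) + a ≤ t)
      = Finset.Ico ((p : ℤ) + a) (a + (q : ℤ)) := by
    ext t
    simp only [Finset.mem_filter, Finset.mem_Ico]
    omega
  rw [h, Int.card_Ico]
  omega

lemma sum_ico_id (a : ℤ) (q : ℕ) :
    2 * ∑ t ∈ Finset.Ico a (a + (q : ℤ)), t = (q : ℤ) * (2 * a + q - 1) := by
  induction q with
  | zero => simp
  | succ q ih =>
      have hset : Finset.Ico a (a + ((q + 1 : ℕ) : ℤ))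
          = insert (a + q) (Finset.Ico a (a + (q : ℤ))) := by
        ext t
        simp only [Finset.mem_Ico, Finset.mem_insert]
        omega
      rw [hset, Finset.sum_insert (by simp [Finset.mem_Ico])]
      push_cast
      push_cast at ih
      linear_combination ih

lemma chain_sum (m : ℕ) (hm : 1 ≤ m) (b : ℕ → ℤ) (T0 : ℤ) (T : ℕ)
    (s : ℕ → ℕ) (S : ℕ → ℤ)
    (hcorr : ∀ j, 1 ≤ j → j ≤ m → S j = (s j : ℤ) + T0)
    (hs1 : ∀ j, 1 ≤ j → j ≤ m → 1 ≤ s j)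
    (hsT : s m ≤ T)
    (hsmono : ∀ j, 1 ≤ j → j < m → s j < s (j + 1)) :
    2 * ∑ t ∈ Finset.Icc T0 (T0 + (T : ℤ)), age m b S t
      = (∑ j ∈ Finset.Icc 1 (m - 1), (2 * (b j - b (j - 1))) * (s j : ℤ))
        + (2 * T0 - 1 - 2 * b (m - 1)) * (s m : ℤ) + (s m : ℤ) * (s m : ℤ) := by
  have hstrict : ∀ j j', 1 ≤ j → j < j' → j' ≤ m → s j < s j' := by
    intro j j' hj hlt hle
    induction j' with
    | zero => omega
    | succ k ih =>
        rcases Nat.lt_succ_iff_lt_or_eq.mp hlt with h | h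
        · exact lt_trans (ih h (by omega)) (hsmono k (by omega) (by omega))
        · subst h; exact hsmono j hj (by omega)
  have hSmono : ∀ j j', 1 ≤ j → j ≤ j' → j' ≤ m → S j ≤ S j' := by
    intro j j' hj hle hle'
    rcases eq_or_lt_of_le hle with h | h
    · rw [h]
    · rw [hcorr j hj (by omega), hcorr j' (by omega) hle']
      have := hstrict j j' hj h hle'
      omega
  set D := Finset.Icc 1 (m - 1) with hD
  have hn1 : 1 ≤ s m := hs1 m hm le_rfl
  have hlm : ∀ (t : ℤ) (j : ℕ), 1 ≤ j → j ≤ m → (j ≤ lm m S t ↔ S j ≤ t) :=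
    fun t j hj hjm => lm_iff m S t hSmono j hj hjm
  have hage0 : ∀ t : ℤ, S m ≤ t → age m b S t = 0 := by
    intro t ht
    have h1 : m ≤ lm m S t := (hlm t m hm le_rfl).mpr ht
    have h2 := lm_le m S t
    have h3 : lm m S t = m := le_antisymm h2 h1
    rw [age, if_pos h3]
  have hlmlt : ∀ t : ℤ, t < S m → lm m S t < m := by
    intro t ht
    rcases lt_or_eq_of_le (lm_le m S t) with h | h
    · exact h
    · exfalso
      have := (hlm t m hm le_rfl).mp (by omega)
      omega
  have hage1 : ∀ t : ℤ, t < S m → age m b S t = t - b (lm m S t) := by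
    intro t ht
    have := hlmlt t ht
    rw [age, if_neg (by omega)]
  have hb : ∀ t : ℤ, t < S m →
      b (lm m S t) = b 0 + ∑ j ∈ D, (b j - b (j - 1)) * (if S j ≤ t then 1 else 0) := by
    intro t ht
    have hk := hlmlt t ht
    set k := lm m S t with hkdef
    have h1 : ∑ j ∈ D, (b j - b (j - 1)) * (if S j ≤ t then (1 : ℤ) else 0)
        = ∑ j ∈ D, (b j - b (j - 1)) * (if j ≤ k then (1 : ℤ) else 0) := by
      apply Finset.sum_congr rfl
      intro j hj
      simp only [hD, Finset.mem_Icc] at hj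
      congr 1
      exact if_congr (by rw [hlm t j hj.1 (by omega)]) rfl rfl
    have h2 : ∑ j ∈ D, (b j - b (j - 1)) * (if j ≤ k then (1 : ℤ) else 0)
        = ∑ j ∈ Finset.Icc 1 k, (b j - b (j - 1)) := by
      rw [← Finset.sum_subset
        (Finset.Icc_subset_Icc_right (by omega) : Finset.Icc 1 k ⊆ Finset.Icc 1 (m - 1))]
      · apply Finset.sum_congr rfl
        intro j hj
        simp only [Finset.mem_Icc] at hj
        rw [if_pos hj.2, mul_one]
      · intro j hj hj'
        simp only [Finset.mem_Icc] at hj hj'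
        rw [if_neg (by omega), mul_zero]
    rw [h1, h2, tele_sum]
    ring
  have hsplit : Finset.Icc T0 (T0 + (T : ℤ))
      = Finset.Ico T0 (T0 + (s m : ℤ)) ∪ Finset.Icc (T0 + (s m : ℤ)) (T0 + (T : ℤ)) := by
    ext t
    simp only [Finset.mem_Icc, Finset.mem_Ico, Finset.mem_union]
    omega
  have hdisj : Disjoint (Finset.Ico T0 (T0 + (s m : ℤ)))
      (Finset.Icc (T0 + (s m : ℤ)) (T0 + (T : ℤ))) := by
    rw [Finset.disjoint_left]
    intro t ht ht'
    simp only [Finset.mem_Ico] at ht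
    simp only [Finset.mem_Icc] at ht'
    omega
  have hSm : S m = (s m : ℤ) + T0 := hcorr m hm le_rfl
  rw [hsplit, Finset.sum_union hdisj]
  have hzero : ∑ t ∈ Finset.Icc (T0 + (s m : ℤ)) (T0 + (T : ℤ)), age m b S t = 0 := by
    apply Finset.sum_eq_zero
    intro t ht
    simp only [Finset.mem_Icc] at ht
    exact hage0 t (by omega)
  rw [hzero, add_zero]
  have hmain : ∑ t ∈ Finset.Ico T0 (T0 + (s m : ℤ)), age m b S t
      = ∑ t ∈ Finset.Ico T0 (T0 + (s m : ℤ)),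
          (t - b 0 - ∑ j ∈ D, (b j - b (j - 1)) * (if S j ≤ t then 1 else 0)) := by
    apply Finset.sum_congr rfl
    intro t ht
    simp only [Finset.mem_Ico] at ht
    rw [hage1 t (by omega), hb t (by omega)]
    ring
  rw [hmain, Finset.sum_sub_distrib, Finset.sum_sub_distrib, Finset.sum_const, Finset.sum_comm]
  have hcard : (Finset.Ico T0 (T0 + (s m : ℤ))).card = s m := by
    rw [Int.card_Ico]
    omega
  rw [hcard]
  have hinner : ∀ j ∈ D,
      ∑ t ∈ Finset.Ico T0 (T0 + (s m : ℤ)), (b j - b (j - 1)) * (if S j ≤ t then (1 : ℤ) else 0)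
        = (b j - b (j - 1)) * ((s m : ℤ) - (s j : ℤ)) := by
    intro j hj
    simp only [hD, Finset.mem_Icc] at hj
    rw [← Finset.mul_sum]
    congr 1
    have hSj : S j = (s j : ℤ) + T0 := hcorr j hj.1 (by omega)
    have hle : s j ≤ s m := le_of_lt (hstrict j m hj.1 (by omega) le_rfl)
    calc ∑ t ∈ Finset.Ico T0 (T0 + (s m : ℤ)), (if S j ≤ t then (1 : ℤ) else 0)
        = ∑ t ∈ Finset.Ico T0 (T0 + (s m : ℤ)), (if (s j : ℤ) + T0 ≤ t then (1 : ℤ) else 0) := by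
          simp only [hSj]
      _ = (s m : ℤ) - (s j : ℤ) := count_ico T0 (s j) (s m) hle
  rw [Finset.sum_congr rfl hinner]
  have hsum2 : ∑ j ∈ D, (b j - b (j - 1)) * ((s m : ℤ) - (s j : ℤ))
      = (b (m - 1) - b 0) * (s m : ℤ) - ∑ j ∈ D, (b j - b (j - 1)) * (s j : ℤ) := by
    have h : ∀ j ∈ D, (b j - b (j - 1)) * ((s m : ℤ) - (s j : ℤ))
        = (b j - b (j - 1)) * (s m : ℤ) - (b j - b (j - 1)) * (s j : ℤ) := by
      intro j _; ring
    rw [Finset.sum_congr rfl h, Finset.sum_sub_distrib, ← Finset.sum_mul, hD, tele_sum]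
  rw [hsum2]
  have h2E2 : ∑ j ∈ D, (2 * (b j - b (j - 1))) * (s j : ℤ)
      = 2 * ∑ j ∈ D, (b j - b (j - 1)) * (s j : ℤ) := by
    rw [Finset.mul_sum]
    exact Finset.sum_congr rfl fun j _ => by ring
  rw [h2E2]
  have hsumt := sum_ico_id T0 (s m)
  have hns : ((s m : ℕ) : ℤ) • b 0 = (s m : ℤ) * b 0 := by
    simp [nsmul_eq_mul]
  rw [nsmul_eq_mul]
  linear_combination hsumt
theorem minAge_minWCS_transformation
    (n : ℕ) (m : Fin n → ℕ) (hm : ∀ i, 1 ≤ m i)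
    (b : Fin n → ℕ → ℤ) (T0 : ℤ)
    (hb0 : ∀ i, 0 ≤ b i 0)
    (hbmono : ∀ i, ∀ j < m i, b i j < b i (j + 1))
    (hbT0 : ∀ i, b i (m i) ≤ T0)
    (T : ℕ) (hT : T = ∑ i, m i)
    (w : Fin n → ℕ → ℤ)
    (hw_int : ∀ i j, 1 ≤ j → j < m i → w i j = 2 * (b i j - b i (j - 1)))
    (hw_leaf : ∀ i, w i (m i) = 2 * T0 - 1 - 2 * b i (m i - 1))
    (Sage : Fin n → ℕ → ℤ) (Sjob : Fin n → ℕ → ℕ)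
    (hcorr : ∀ i j, 1 ≤ j → j ≤ m i → Sage i j = (Sjob i j : ℤ) + T0) :
    (AgeFeasible n m T0 T Sage ↔ JobFeasible n m T Sjob) ∧
    (AgeFeasible n m T0 T Sage →
      2 * Age n m b T0 T Sage = wcs n m w Sjob) := by
  have hiff : AgeFeasible n m T0 T Sage ↔ JobFeasible n m T Sjob := by
    constructor
    · rintro ⟨h1, h2, h3, h4⟩
      refine ⟨?_, ?_, ?_, ?_⟩
      · intro i j hj1 hjm
        have := h1 i j hj1 hjm
        rw [hcorr i j hj1 hjm] at this
        simp only [Finset.mem_Icc] at this ⊢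
        omega
      · intro i j i' j' hj1 hjm hj1' hjm' heq
        apply h2 i j i' j' hj1 hjm hj1' hjm'
        rw [hcorr i j hj1 hjm, hcorr i' j' hj1' hjm', heq]
      · intro t ht
        simp only [Finset.mem_Icc] at ht
        obtain ⟨i, j, hj1, hjm, hS⟩ := h3 (T0 + t)
          (by simp only [Finset.mem_Icc]; omega)
        refine ⟨i, j, hj1, hjm, ?_⟩
        rw [hcorr i j hj1 hjm] at hS
        omega
      · intro i j hj1 hjm
        have := h4 i j hj1 hjm
        rw [hcorr i j hj1 (by omega), hcorr i (j + 1) (by omega) (by omega)] at this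
        omega
    · rintro ⟨h1, h2, h3, h4⟩
      refine ⟨?_, ?_, ?_, ?_⟩
      · intro i j hj1 hjm
        have := h1 i j hj1 hjm
        rw [hcorr i j hj1 hjm]
        simp only [Finset.mem_Icc] at this ⊢
        omega
      · intro i j i' j' hj1 hjm hj1' hjm' heq
        apply h2 i j i' j' hj1 hjm hj1' hjm'
        rw [hcorr i j hj1 hjm, hcorr i' j' hj1' hjm'] at heq
        omega
      · intro t ht
        simp only [Finset.mem_Icc] at ht
        obtain ⟨i, j, hj1, hjm, hS⟩ := h3 (t - T0).toNat
          (by simp only [Finset.mem_Icc]; omega)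
        refine ⟨i, j, hj1, hjm, ?_⟩
        rw [hcorr i j hj1 hjm, hS]
        omega
      · intro i j hj1 hjm
        have := h4 i j hj1 hjm
        rw [hcorr i j hj1 (by omega), hcorr i (j + 1) (by omega) (by omega)]
        omega
  refine ⟨hiff, fun hA => ?_⟩
  obtain ⟨hJ1, hJ2, hJ3, hJ4⟩ := hiff.mp hA
  unfold Age wcs
  rw [Finset.mul_sum, ← Finset.sum_add_distrib]
  apply Finset.sum_congr rfl
  intro i _
  have hkey := chain_sum (m i) (hm i) (b i) T0 T (Sjob i) (Sage i)
      (fun j hj1 hjm => hcorr i j hj1 hjm)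
      (fun j hj1 hjm => by
        have := hJ1 i j hj1 hjm
        simp only [Finset.mem_Icc] at this
        omega)
      (by
        have := hJ1 i (m i) (hm i) le_rfl
        simp only [Finset.mem_Icc] at this
        omega)
      (fun j hj1 hjm => hJ4 i j hj1 hjm)
  rw [hkey]
  have hsplit : ∑ j ∈ Finset.Icc 1 (m i), w i j * (Sjob i j : ℤ)
      = (∑ j ∈ Finset.Icc 1 (m i - 1), (2 * (b i j - b i (j - 1))) * (Sjob i j : ℤ))
        + (2 * T0 - 1 - 2 * b i (m i - 1)) * (Sjob i (m i) : ℤ) := by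
    obtain ⟨k, hk⟩ : ∃ k, m i = k + 1 := ⟨m i - 1, by have := hm i; omega⟩
    have hleaf := hw_leaf i
    rw [hk] at hleaf ⊢
    simp only [Nat.add_sub_cancel] at hleaf ⊢
    rw [Finset.sum_Icc_succ_top (by omega)]
    congr 1
    · apply Finset.sum_congr rfl
      intro j hj
      simp only [Finset.mem_Icc] at hj
      rw [hw_int i j hj.1 (by omega)]
    · rw [hleaf]
  rw [hsplit]
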